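/- arXiv:1306.3770 — 5 statements merged into one kernel-verified Lean document; each statement's English description precedes it below -/
import Mathlib

section
/- Let 1 ≤ k < n be integers. For every h ∈ ℝ^n, every γ > 0 and every ν ≥ 0, max_{w ∈ S_sec(n,k)} (−hᵀw) ≤ γ + (1/(4γ))·( Σ_{i=n−k+1}^{n} (|h_i| + ν)² + Σ_{i=1}^{n−k} (max(|h_i| − ν, 0))² ). -/
/-- `Ssec n k`: unit-norm vectors in `ℝ^n` whose ℓ1 mass on the first `n-k`
coordinates is at most that on the last `k` coordinates. -/
def Ssec (n k : ℕ) : Set (Fin n → ℝ) :=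
  {w | ∑ i, (w i) ^ 2 = 1 ∧
    ∑ i ∈ Finset.univ.filter (fun i : Fin n => (i : ℕ) < n - k), |w i| ≤
      ∑ i ∈ Finset.univ.filter (fun i : Fin n => n - k ≤ (i : ℕ)), |w i|}

lemma amgm_aux (γ a b : ℝ) (hγ : 0 < γ) (ha : 0 ≤ a) :
    a * |b| ≤ γ * b ^ 2 + a ^ 2 / (4 * γ) := by
  have h4 : (0:ℝ) < 4 * γ := by linarith
  have key : (a * |b| - γ * b ^ 2) * (4 * γ) ≤ a ^ 2 := by
    have e : (2 * γ * |b| - a) ^ 2 = 4 * γ ^ 2 * b ^ 2 - 4 * γ * (a * |b|) + a ^ 2 := by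
      rw [← sq_abs b]; ring
    have e2 : (a * |b| - γ * b ^ 2) * (4 * γ) = 4 * γ * (a * |b|) - 4 * γ ^ 2 * b ^ 2 := by
      ring
    have e3 := sq_nonneg (2 * γ * |b| - a)
    rw [e] at e3
    rw [e2]
    linarith
  have h5 : a * |b| - γ * b ^ 2 ≤ a ^ 2 / (4 * γ) := (le_div_iff₀ h4).mpr key
  linarith

theorem sec_dual_upper_bound (n k : ℕ) (hk : 1 ≤ k) (hkn : k < n)
    (h : Fin n → ℝ) (γ ν : ℝ) (hγ : 0 < γ) (hν : 0 ≤ ν) :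
    (⨆ w : Ssec n k, -(∑ i, h i * w.1 i)) ≤
      γ + (1 / (4 * γ)) *
        ((∑ i ∈ Finset.univ.filter (fun i : Fin n => n - k ≤ (i : ℕ)), (|h i| + ν) ^ 2)
          + ∑ i ∈ Finset.univ.filter (fun i : Fin n => (i : ℕ) < n - k),
              (max (|h i| - ν) 0) ^ 2) := by
  set A := Finset.univ.filter (fun i : Fin n => (i : ℕ) < n - k) with hA
  set B := Finset.univ.filter (fun i : Fin n => n - k ≤ (i : ℕ)) with hB
  have hRHS : (0:ℝ) ≤ γ + (1 / (4 * γ)) *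
      ((∑ i ∈ B, (|h i| + ν) ^ 2) + ∑ i ∈ A, (max (|h i| - ν) 0) ^ 2) := by
    have h1 : (0:ℝ) ≤ ∑ i ∈ B, (|h i| + ν) ^ 2 :=
      Finset.sum_nonneg fun i _ => sq_nonneg _
    have h2 : (0:ℝ) ≤ ∑ i ∈ A, (max (|h i| - ν) 0) ^ 2 :=
      Finset.sum_nonneg fun i _ => sq_nonneg _
    have : (0:ℝ) ≤ 1 / (4 * γ) := by positivity
    nlinarith
  apply Real.iSup_le _ hRHS
  rintro ⟨w, hw1, hw2⟩
  simp only
  have hsplit : ∀ f : Fin n → ℝ, ∑ i, f i = ∑ i ∈ A, f i + ∑ i ∈ B, f i := by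
    intro f
    rw [← Finset.sum_filter_add_sum_filter_not Finset.univ
      (fun i : Fin n => (i : ℕ) < n - k) f]
    congr 1
    apply Finset.sum_congr _ fun _ _ => rfl
    simp [hB, not_lt]
  have step1 : -(∑ i, h i * w i) ≤ ∑ i, |h i| * |w i| := by
    rw [← Finset.sum_neg_distrib]
    apply Finset.sum_le_sum
    intro i _
    calc -(h i * w i) ≤ |h i * w i| := neg_le_abs _
      _ = |h i| * |w i| := abs_mul _ _
  have step2 : ∑ i, |h i| * |w i| ≤
      ∑ i ∈ B, (|h i| + ν) * |w i| + ∑ i ∈ A, max (|h i| - ν) 0 * |w i| := by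
    rw [hsplit (fun i => |h i| * |w i|)]
    have hB' : ∑ i ∈ B, (|h i| + ν) * |w i|
        = ∑ i ∈ B, |h i| * |w i| + ν * ∑ i ∈ B, |w i| := by
      rw [Finset.mul_sum, ← Finset.sum_add_distrib]
      exact Finset.sum_congr rfl fun i _ => by ring
    have hA' : ∑ i ∈ A, |h i| * |w i| - ν * ∑ i ∈ A, |w i|
        ≤ ∑ i ∈ A, max (|h i| - ν) 0 * |w i| := by
      rw [Finset.mul_sum, ← Finset.sum_sub_distrib]
      apply Finset.sum_le_sum
      intro i _
      have : |h i| * |w i| - ν * |w i| = (|h i| - ν) * |w i| := by ring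
      rw [this]
      exact mul_le_mul_of_nonneg_right (le_max_left _ _) (abs_nonneg _)
    have hν' : ν * ∑ i ∈ A, |w i| ≤ ν * ∑ i ∈ B, |w i| :=
      mul_le_mul_of_nonneg_left hw2 hν
    linarith
  have step3 : ∑ i ∈ B, (|h i| + ν) * |w i| + ∑ i ∈ A, max (|h i| - ν) 0 * |w i|
      ≤ γ + (1 / (4 * γ)) *
        ((∑ i ∈ B, (|h i| + ν) ^ 2) + ∑ i ∈ A, (max (|h i| - ν) 0) ^ 2) := by
    have hBle : ∑ i ∈ B, (|h i| + ν) * |w i|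
        ≤ ∑ i ∈ B, (γ * (w i) ^ 2 + (|h i| + ν) ^ 2 / (4 * γ)) :=
      Finset.sum_le_sum fun i _ =>
        amgm_aux γ _ _ hγ (by positivity)
    have hAle : ∑ i ∈ A, max (|h i| - ν) 0 * |w i|
        ≤ ∑ i ∈ A, (γ * (w i) ^ 2 + (max (|h i| - ν) 0) ^ 2 / (4 * γ)) :=
      Finset.sum_le_sum fun i _ =>
        amgm_aux γ _ _ hγ (le_max_right _ _)
    have hsum : ∑ i ∈ A, (γ * (w i) ^ 2 + (max (|h i| - ν) 0) ^ 2 / (4 * γ))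
        + ∑ i ∈ B, (γ * (w i) ^ 2 + (|h i| + ν) ^ 2 / (4 * γ))
        = γ * (∑ i ∈ A, (w i) ^ 2 + ∑ i ∈ B, (w i) ^ 2)
          + (1 / (4 * γ)) *
            ((∑ i ∈ B, (|h i| + ν) ^ 2) + ∑ i ∈ A, (max (|h i| - ν) 0) ^ 2) := by
      simp only [Finset.sum_add_distrib, ← Finset.mul_sum, ← Finset.sum_div]
      field_simp
      ring
    have hnorm : ∑ i ∈ A, (w i) ^ 2 + ∑ i ∈ B, (w i) ^ 2 = 1 := by
      rw [← hsplit (fun i => (w i) ^ 2)]; exact hw1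
    calc ∑ i ∈ B, (|h i| + ν) * |w i| + ∑ i ∈ A, max (|h i| - ν) 0 * |w i|
        ≤ ∑ i ∈ B, (γ * (w i) ^ 2 + (|h i| + ν) ^ 2 / (4 * γ))
          + ∑ i ∈ A, (γ * (w i) ^ 2 + (max (|h i| - ν) 0) ^ 2 / (4 * γ)) := by
          linarith
      _ = γ + (1 / (4 * γ)) *
            ((∑ i ∈ B, (|h i| + ν) ^ 2) + ∑ i ∈ A, (max (|h i| - ν) 0) ^ 2) := by
          rw [add_comm, hsum, hnorm, mul_one]
  linarith
end

section
/- Let h be a standard normal random variable, let 0 ≤ b < 1/2 and ν ≥ 0. Then E[ exp( b·(|h| + ν)² ) ] = ( e^{bν²/(1−2b)} / √(1−2b) ) · ( 1 + erf( √2·b·ν / √(1−2b) ) ). -/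
open MeasureTheory ProbabilityTheory

/-- The standard error function `erf x = (2/√π) ∫₀ˣ e^{−t²} dt`. -/
noncomputable def erf (x : ℝ) : ℝ :=
  (2 / Real.sqrt Real.pi) * ∫ t in (0 : ℝ)..x, Real.exp (-t ^ 2)

theorem gaussian_exp_sq_abs_add
    {Ω : Type*} [MeasureSpace Ω] [IsProbabilityMeasure (volume : Measure Ω)]
    (h : Ω → ℝ) (hmeas : Measurable h)
    (hdist : Measure.map h volume = gaussianReal 0 1)
    (b ν : ℝ) (hb0 : 0 ≤ b) (hb : b < 1 / 2) (hν : 0 ≤ ν) :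
    ∫ ω, Real.exp (b * (|h ω| + ν) ^ 2) =
      (Real.exp (b * ν ^ 2 / (1 - 2 * b)) / Real.sqrt (1 - 2 * b)) *
        (1 + erf (Real.sqrt 2 * b * ν / Real.sqrt (1 - 2 * b))) := by
  have ha : (0:ℝ) < 1 - 2 * b := by linarith
  set a : ℝ := 1 - 2 * b with ha_def
  have ha2 : (0:ℝ) < a / 2 := by linarith
  set c : ℝ := 2 * b * ν / a with hc_def
  have hc : 0 ≤ c := by positivity
  set C : ℝ := (Real.sqrt (2 * Real.pi))⁻¹ with hC_def
  -- Step 1: transfer to an integral over ℝ against the Gaussian measure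
  have hcont : Continuous fun x : ℝ => Real.exp (b * (|x| + ν) ^ 2) := by continuity
  have step1 : ∫ ω, Real.exp (b * (|h ω| + ν) ^ 2)
      = ∫ x, Real.exp (b * (|x| + ν) ^ 2) ∂(gaussianReal 0 1) := by
    rw [← hdist, integral_map hmeas.aemeasurable hcont.aestronglyMeasurable]
  rw [step1, gaussianReal_of_var_ne_zero 0 one_ne_zero]
  have hwd : volume.withDensity (gaussianPDF 0 1)
      = volume.withDensity (fun x => ((Real.toNNReal (gaussianPDFReal 0 1 x)) : ENNReal)) := rfl
  rw [hwd, integral_withDensity_eq_integral_smul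
    ((measurable_gaussianPDFReal 0 1).real_toNNReal)]
  -- Step 2: rewrite the integrand as an even function F(|x|)
  have step2 : ∀ x : ℝ, (Real.toNNReal (gaussianPDFReal 0 1 x)) • Real.exp (b * (|x| + ν) ^ 2)
      = (fun u : ℝ => C * Real.exp (b * (u + ν) ^ 2 - u ^ 2 / 2)) |x| := by
    intro x
    rw [NNReal.smul_def, Real.coe_toNNReal _ (gaussianPDFReal_nonneg 0 1 x)]
    simp only [gaussianPDFReal, NNReal.coe_one, mul_one, sub_zero]
    rw [smul_eq_mul, mul_assoc, ← Real.exp_add, hC_def, sq_abs]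
    congr 1
    ring_nf
  simp_rw [step2]
  rw [integral_comp_abs (f := fun u : ℝ => C * Real.exp (b * (u + ν) ^ 2 - u ^ 2 / 2))]
  -- Step 3: complete the square
  have step3 : ∀ x : ℝ, C * Real.exp (b * (x + ν) ^ 2 - x ^ 2 / 2)
      = C * Real.exp (b * ν ^ 2 / a) * Real.exp (-(a/2) * (x - c) ^ 2) := by
    intro x
    rw [mul_assoc, ← Real.exp_add]
    congr 2
    rw [hc_def, ha_def]
    have h12 : (1:ℝ) - 2 * b ≠ 0 := by linarith
    generalize hA : (1:ℝ) - 2 * b = A at h12 ⊢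
    have hb' : b = (1 - A)/2 := by linarith
    subst hb'
    field_simp
    ring
  simp_rw [step3]
  rw [integral_const_mul]
  -- Step 4: translate the half-line integral
  have step4 : ∫ x in Set.Ioi (0:ℝ), Real.exp (-(a/2) * (x - c) ^ 2)
      = ∫ y in Set.Ioi (-c), Real.exp (-(a/2) * y ^ 2) := by
    have hemb : MeasurableEmbedding (fun x : ℝ => x + c) :=
      (Homeomorph.addRight c).isClosedEmbedding.measurableEmbedding
    have := (measurePreserving_add_right volume c).setIntegral_preimage_emb hemb
      (fun y => Real.exp (-(a/2) * (y - c) ^ 2)) (Set.Ioi 0)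
    simp only [Set.preimage_add_const_Ioi, zero_sub, add_sub_cancel_right] at this
    exact this.symm
  rw [step4]
  -- Step 5: split at 0
  have hint : Integrable (fun y : ℝ => Real.exp (-(a/2) * y ^ 2)) :=
    integrable_exp_neg_mul_sq ha2
  have step5 : ∫ y in Set.Ioi (-c), Real.exp (-(a/2) * y ^ 2)
      = (∫ y in Set.Ioc (-c) 0, Real.exp (-(a/2) * y ^ 2))
        + ∫ y in Set.Ioi (0:ℝ), Real.exp (-(a/2) * y ^ 2) := by
    rw [← setIntegral_union (Set.Ioc_disjoint_Ioi le_rfl) measurableSet_Ioi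
      hint.integrableOn hint.integrableOn,
      Set.Ioc_union_Ioi_eq_Ioi (neg_nonpos.mpr hc)]
  rw [step5]
  -- Step 6: the Ioc part is an erf-type integral
  have hs : Real.sqrt (a/2) ≠ 0 := by positivity
  have step6 : ∫ y in Set.Ioc (-c) 0, Real.exp (-(a/2) * y ^ 2)
      = (Real.sqrt (a/2))⁻¹ * ∫ t in (0:ℝ)..(c * Real.sqrt (a/2)), Real.exp (-t ^ 2) := by
    rw [← intervalIntegral.integral_of_le (by linarith : -c ≤ 0)]
    have h1 := intervalIntegral.integral_comp_neg
      (a := 0) (b := c) (fun x => Real.exp (-(a/2) * x ^ 2))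
    simp only [neg_sq, neg_zero] at h1
    rw [← h1]
    have hsub : ∀ x : ℝ, Real.exp (-(a/2) * x ^ 2)
        = (fun t => Real.exp (-t ^ 2)) (x * Real.sqrt (a/2)) := by
      intro x
      simp only [mul_pow, Real.sq_sqrt ha2.le]
      congr 1
      ring
    simp_rw [hsub]
    rw [intervalIntegral.integral_comp_mul_right (fun t => Real.exp (-t ^ 2)) hs]
    simp [smul_eq_mul]
  rw [step6, integral_gaussian_Ioi (a/2)]
  -- Step 7: identify the erf argument
  have harg : c * Real.sqrt (a/2) = Real.sqrt 2 * b * ν / Real.sqrt a := by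
    have h2 : Real.sqrt 2 * Real.sqrt 2 = 2 := Real.mul_self_sqrt (by norm_num)
    have haa : Real.sqrt a * Real.sqrt a = a := Real.mul_self_sqrt ha.le
    have h2pos : (0:ℝ) < Real.sqrt 2 := by positivity
    have hapos : (0:ℝ) < Real.sqrt a := Real.sqrt_pos.mpr ha
    rw [Real.sqrt_div ha.le 2, hc_def]
    field_simp
    linear_combination (2 * b * ν) * haa - (b * ν * a) * h2
  rw [harg]
  -- Step 8: final algebra
  rw [erf]
  set I : ℝ := ∫ t in (0:ℝ)..(Real.sqrt 2 * b * ν / Real.sqrt a), Real.exp (-t ^ 2) with hI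
  have hsqa2 : Real.sqrt (a/2) = Real.sqrt a / Real.sqrt 2 := Real.sqrt_div ha.le 2
  have hsqpi : Real.sqrt (Real.pi / (a/2)) = Real.sqrt Real.pi / Real.sqrt (a/2) :=
    Real.sqrt_div Real.pi_pos.le _
  have hsq2pi : Real.sqrt (2 * Real.pi) = Real.sqrt 2 * Real.sqrt Real.pi :=
    Real.sqrt_mul (by norm_num) _
  have h2pos : (0:ℝ) < Real.sqrt 2 := by positivity
  have hppos : (0:ℝ) < Real.sqrt Real.pi := Real.sqrt_pos.mpr Real.pi_pos
  have hapos : (0:ℝ) < Real.sqrt a := Real.sqrt_pos.mpr ha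
  rw [hC_def, hsqpi, hsqa2, hsq2pi]
  field_simp
  ring
end

section
/- Let h be a standard normal random variable, let 0 ≤ b < 1/2 and ν ≥ 0. Then E[ exp( b·(max(|h| − ν, 0))² ) ] = ( e^{bν²/(1−2b)} / √(1−2b) ) · erfc( ν / √(2(1−2b)) ) + erf( ν/√2 ). -/
open MeasureTheory ProbabilityTheory

/-- The complementary error function. -/
noncomputable def erfc (x : ℝ) : ℝ := 1 - erf x

open Real Set
open scoped ENNReal NNReal

private lemma shift_Ioi (k c ν : ℝ) :
    ∫ x in Ioi ν, rexp (-k * (x + c) ^ 2) = ∫ y in Ioi (ν + c), rexp (-k * y ^ 2) := by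
  have := (measurePreserving_add_right volume c).setIntegral_preimage_emb
    (measurableEmbedding_addRight c) (fun y => rexp (-k * y ^ 2)) (Ioi (ν + c))
  simpa [preimage_add_const_Ioi] using this

private lemma gauss_tail (k d : ℝ) (hk : 0 < k) (hd : 0 ≤ d) :
    ∫ x in Ioi d, rexp (-k * x ^ 2) =
      Real.sqrt (π / k) / 2 - (Real.sqrt k)⁻¹ * ∫ t in (0:ℝ)..(d * Real.sqrt k), rexp (-t ^ 2) := by
  have hint : Integrable fun x : ℝ => rexp (-k * x ^ 2) := integrable_exp_neg_mul_sq hk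
  have hsplit : (∫ x in Ioc 0 d, rexp (-k * x ^ 2)) + ∫ x in Ioi d, rexp (-k * x ^ 2)
      = ∫ x in Ioi (0:ℝ), rexp (-k * x ^ 2) := by
    rw [← setIntegral_union (Ioc_disjoint_Ioi le_rfl) measurableSet_Ioi
      hint.integrableOn hint.integrableOn, Ioc_union_Ioi_eq_Ioi hd]
  rw [integral_gaussian_Ioi] at hsplit
  have hsk : (0:ℝ) < Real.sqrt k := Real.sqrt_pos.mpr hk
  have h2 : ∫ x in Ioc 0 d, rexp (-k * x ^ 2)
      = (Real.sqrt k)⁻¹ * ∫ t in (0:ℝ)..(d * Real.sqrt k), rexp (-t ^ 2) := by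
    rw [← intervalIntegral.integral_of_le hd]
    have : ∀ x : ℝ, rexp (-k * x ^ 2) = rexp (-(x * Real.sqrt k) ^ 2) := by
      intro x
      rw [mul_pow, Real.sq_sqrt hk.le]
      ring_nf
    simp_rw [this]
    rw [intervalIntegral.integral_comp_mul_right (fun t => rexp (-t ^ 2)) hsk.ne']
    simp [smul_eq_mul]
  linarith

private lemma gauss_half_main (b ν : ℝ) (hb0 : 0 ≤ b) (hb : b < 1 / 2) (hν : 0 ≤ ν) :
    2 * ∫ x in Ioi (0:ℝ),
        (Real.sqrt (2 * π))⁻¹ * (rexp (-x ^ 2 / 2) * rexp (b * (max (x - ν) 0) ^ 2)) =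
      (Real.exp (b * ν ^ 2 / (1 - 2 * b)) / Real.sqrt (1 - 2 * b)) *
        erfc (ν / Real.sqrt (2 * (1 - 2 * b))) + erf (ν / Real.sqrt 2) := by
  set a : ℝ := 1 - 2 * b with ha_def
  have ha : 0 < a := by simp only [ha_def]; linarith
  have hane : a ≠ 0 := ha.ne'
  set F : ℝ → ℝ := fun x =>
    (Real.sqrt (2 * π))⁻¹ * (rexp (-x ^ 2 / 2) * rexp (b * (max (x - ν) 0) ^ 2)) with hF_def
  have hFc : Continuous F := by
    apply Continuous.mul continuous_const
    exact ((Real.continuous_exp.comp (by fun_prop)).mul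
      (Real.continuous_exp.comp (Continuous.mul continuous_const
        (((continuous_id.sub continuous_const).max continuous_const).pow 2))))
  have hbound : Integrable fun x : ℝ => (Real.sqrt (2 * π))⁻¹ * rexp (-(a / 2) * x ^ 2) :=
    (integrable_exp_neg_mul_sq (by positivity)).const_mul _
  have hIntIoi : IntegrableOn F (Ioi ν) := by
    apply Integrable.mono hbound.integrableOn hFc.aestronglyMeasurable
    filter_upwards [ae_restrict_mem measurableSet_Ioi] with x hx
    have hxν : ν ≤ x := le_of_lt hx
    have hx0 : 0 ≤ x := le_trans hν hxν
    have hmax : max (x - ν) 0 = x - ν := max_eq_left (by linarith)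
    have h1 : (x - ν) ^ 2 ≤ x ^ 2 := by nlinarith
    have hFx : F x = (Real.sqrt (2 * π))⁻¹ * rexp (-x ^ 2 / 2 + b * (x - ν) ^ 2) := by
      rw [hF_def]; simp only [hmax, ← Real.exp_add]
    have hpos : (0:ℝ) < (Real.sqrt (2 * π))⁻¹ := by positivity
    rw [Real.norm_eq_abs, Real.norm_eq_abs, hFx, abs_of_pos (by positivity),
      abs_of_pos (by positivity)]
    apply mul_le_mul_of_nonneg_left _ hpos.le
    apply Real.exp_le_exp.mpr
    have : b * (x - ν) ^ 2 ≤ b * x ^ 2 := mul_le_mul_of_nonneg_left h1 hb0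
    simp only [ha_def]; nlinarith
  have hIntIoc : IntegrableOn F (Ioc 0 ν) := hFc.integrableOn_Ioc
  have hsplit : ∫ x in Ioi (0:ℝ), F x = (∫ x in Ioc 0 ν, F x) + ∫ x in Ioi ν, F x := by
    rw [← setIntegral_union (Ioc_disjoint_Ioi le_rfl) measurableSet_Ioi hIntIoc hIntIoi,
      Ioc_union_Ioi_eq_Ioi hν]
  have hA : ∫ x in Ioc 0 ν, F x
      = (Real.sqrt (2 * π))⁻¹ * (Real.sqrt 2 * ∫ t in (0:ℝ)..(ν / Real.sqrt 2), rexp (-t ^ 2)) := by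
    have hcong : ∀ x ∈ Ioc (0:ℝ) ν, F x
        = (Real.sqrt (2 * π))⁻¹ * rexp (-(x * (Real.sqrt 2)⁻¹) ^ 2) := by
      intro x hx
      have hmax : max (x - ν) 0 = 0 := max_eq_right (by linarith [hx.2])
      have h2 : (x * (Real.sqrt 2)⁻¹) ^ 2 = x ^ 2 / 2 := by
        rw [mul_pow, inv_pow, Real.sq_sqrt (by norm_num : (2:ℝ) ≥ 0)]
        ring
      rw [hF_def]
      simp only [hmax, h2]
      rw [neg_div]
      simp
    rw [setIntegral_congr_fun measurableSet_Ioc hcong, ← intervalIntegral.integral_of_le hν,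
      intervalIntegral.integral_const_mul,
      intervalIntegral.integral_comp_mul_right (fun t => rexp (-t ^ 2))
        (by positivity : (Real.sqrt 2)⁻¹ ≠ 0)]
    have hs2 : (0:ℝ) < Real.sqrt 2 := by positivity
    rw [inv_inv, zero_mul, smul_eq_mul, ← div_eq_mul_inv]
  have hkey : ∀ x : ℝ, -x ^ 2 / 2 + b * (x - ν) ^ 2
      = b * ν ^ 2 / a - a / 2 * (x + 2 * b * ν / a) ^ 2 := by
    intro x
    rw [ha_def]
    have h : (1:ℝ) - 2 * b ≠ 0 := by rwa [← ha_def]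
    field_simp
    ring
  have hB : ∫ x in Ioi ν, F x
      = (Real.sqrt (2 * π))⁻¹ * rexp (b * ν ^ 2 / a) *
        ∫ x in Ioi ν, rexp (-(a / 2) * (x + 2 * b * ν / a) ^ 2) := by
    rw [← integral_const_mul]
    apply setIntegral_congr_fun measurableSet_Ioi
    intro x hx
    have hmax : max (x - ν) 0 = x - ν := max_eq_left (by simp at hx; linarith)
    rw [hF_def]
    simp only [hmax, ← Real.exp_add]
    rw [mul_assoc, ← Real.exp_add, hkey x]
    ring_nf
  have hd2 : ν + 2 * b * ν / a = ν / a := by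
    field_simp [ha_def]; ring
  have hsπ : (0:ℝ) < Real.sqrt π := Real.sqrt_pos.mpr pi_pos
  have hs2 : (0:ℝ) < Real.sqrt 2 := by positivity
  have hsa : (0:ℝ) < Real.sqrt a := Real.sqrt_pos.mpr ha
  have haa : Real.sqrt a * Real.sqrt a = a := Real.mul_self_sqrt ha.le
  have e3 : Real.sqrt (a / 2) = Real.sqrt a / Real.sqrt 2 := Real.sqrt_div ha.le 2
  have harg : ν / a * Real.sqrt (a / 2) = ν / Real.sqrt (2 * a) := by
    rw [e3, Real.sqrt_mul (by norm_num : (0:ℝ) ≤ 2) a]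
    field_simp
    linear_combination ν * haa + ν * ha_def
  have hBval : ∫ x in Ioi ν, rexp (-(a / 2) * (x + 2 * b * ν / a) ^ 2)
      = Real.sqrt (π / (a / 2)) / 2
        - (Real.sqrt (a / 2))⁻¹ * ∫ t in (0:ℝ)..(ν / Real.sqrt (2 * a)), rexp (-t ^ 2) := by
    rw [shift_Ioi (a / 2) (2 * b * ν / a) ν, hd2,
      gauss_tail (a / 2) (ν / a) (by positivity) (by positivity), harg]
  rw [hsplit, hA, hB, hBval]
  simp only [erf, erfc]
  have e1 : Real.sqrt (2 * π) = Real.sqrt 2 * Real.sqrt π :=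
    Real.sqrt_mul (by norm_num) π
  have e2 : Real.sqrt (π / (a / 2)) = Real.sqrt 2 * Real.sqrt π / Real.sqrt a := by
    rw [show π / (a / 2) = 2 * π / a by field_simp,
      Real.sqrt_div (by positivity) a, e1]
  rw [e1, e2, e3]
  field_simp
  ring

theorem gaussian_exp_sq_abs_sub_max
    {Ω : Type*} [MeasureSpace Ω] [IsProbabilityMeasure (volume : Measure Ω)]
    (h : Ω → ℝ) (hmeas : Measurable h)
    (hdist : Measure.map h volume = gaussianReal 0 1)
    (b ν : ℝ) (hb0 : 0 ≤ b) (hb : b < 1 / 2) (hν : 0 ≤ ν) :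
    ∫ ω, Real.exp (b * (max (|h ω| - ν) 0) ^ 2) =
      (Real.exp (b * ν ^ 2 / (1 - 2 * b)) / Real.sqrt (1 - 2 * b)) *
        erfc (ν / Real.sqrt (2 * (1 - 2 * b))) + erf (ν / Real.sqrt 2) := by
  have hcont : Continuous fun x : ℝ => rexp (b * max (|x| - ν) 0 ^ 2) := by
    fun_prop
  have step1 : ∫ ω, rexp (b * max (|h ω| - ν) 0 ^ 2) =
      ∫ x, rexp (b * max (|x| - ν) 0 ^ 2) ∂(gaussianReal 0 1) := by
    rw [← hdist, integral_map hmeas.aemeasurable hcont.aestronglyMeasurable]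
  rw [step1, gaussianReal_of_var_ne_zero 0 one_ne_zero]
  have hd : (volume.withDensity (gaussianPDF 0 1)) =
      volume.withDensity fun x => ((gaussianPDFReal 0 1 x).toNNReal : ℝ≥0∞) := rfl
  rw [hd, integral_withDensity_eq_integral_smul
    ((measurable_gaussianPDFReal 0 1).real_toNNReal)]
  have heq : ∀ x : ℝ, ((gaussianPDFReal 0 1 x).toNNReal : ℝ≥0) • rexp (b * max (|x| - ν) 0 ^ 2)
      = (Real.sqrt (2 * π))⁻¹ * (rexp (-|x| ^ 2 / 2) * rexp (b * (max (|x| - ν) 0) ^ 2)) := by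
    intro x
    rw [NNReal.smul_def, smul_eq_mul, Real.coe_toNNReal _ (gaussianPDFReal_nonneg 0 1 x)]
    rw [gaussianPDFReal]
    simp [sq_abs, mul_assoc]
  simp_rw [heq]
  rw [integral_comp_abs (f := fun x =>
    (Real.sqrt (2 * π))⁻¹ * (rexp (-x ^ 2 / 2) * rexp (b * (max (x - ν) 0) ^ 2)))]
  exact gauss_half_main b ν hb0 hb hν
end

section
/- Let α > 0 and c > 0. Define F(γ) = γ − (α/(2c))·log(1 − c/(2γ)) for γ < 0, and set γ̂ = (2c − √(4c² + 16α))/8. Then γ̂ < 0 and F(γ) ≤ F(γ̂) for every γ < 0; that is, the supremum of F over γ < 0 is attained at γ̂ and equals γ̂ − (α/(2c))·log(1 − c/(2γ̂)). -/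
theorem sphere_gamma_opt (α c : ℝ) (hα : 0 < α) (hc : 0 < c) :
    (2 * c - Real.sqrt (4 * c ^ 2 + 16 * α)) / 8 < 0 ∧
    ∀ γ : ℝ, γ < 0 →
      γ - (α / (2 * c)) * Real.log (1 - c / (2 * γ)) ≤
        (2 * c - Real.sqrt (4 * c ^ 2 + 16 * α)) / 8 -
          (α / (2 * c)) * Real.log
            (1 - c / (2 * ((2 * c - Real.sqrt (4 * c ^ 2 + 16 * α)) / 8))) := by
  set s := Real.sqrt (4 * c ^ 2 + 16 * α) with hs_def
  have hs_nonneg : 0 ≤ s := Real.sqrt_nonneg _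
  have hs2 : s ^ 2 = 4 * c ^ 2 + 16 * α := Real.sq_sqrt (by nlinarith)
  have hs_gt : 2 * c < s := by nlinarith
  set g : ℝ := (2 * c - s) / 8 with hg_def
  have hg_neg : g < 0 := by rw [hg_def]; linarith
  have hαg : α = 4 * g ^ 2 - 2 * c * g := by
    rw [hg_def]; field_simp; nlinarith
  clear hg_def hs_def
  clear_value g s
  refine ⟨hg_neg, fun γ hγ => ?_⟩
  have hγne : γ ≠ 0 := ne_of_lt hγ
  have hgne : g ≠ 0 := ne_of_lt hg_neg
  have hcne : c ≠ 0 := ne_of_gt hc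
  have h2γc : 2 * γ - c < 0 := by linarith
  have h2gc : 2 * g - c < 0 := by linarith
  have h2γcne : 2 * γ - c ≠ 0 := ne_of_lt h2γc
  have h2gcne : 2 * g - c ≠ 0 := ne_of_lt h2gc
  have hA : 1 - c / (2 * γ) = (2 * γ - c) / (2 * γ) := by field_simp
  have hB : 1 - c / (2 * g) = (2 * g - c) / (2 * g) := by field_simp
  have hApos : (0:ℝ) < (2 * γ - c) / (2 * γ) := div_pos_of_neg_of_neg h2γc (by linarith)
  have hBpos : (0:ℝ) < (2 * g - c) / (2 * g) := div_pos_of_neg_of_neg h2gc (by linarith)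
  set A : ℝ := (2 * γ - c) / (2 * γ)
  set B : ℝ := (2 * g - c) / (2 * g)
  have hlog : Real.log (B / A) ≤ B / A - 1 :=
    Real.log_le_sub_one_of_pos (div_pos hBpos hApos)
  rw [Real.log_div (ne_of_gt hBpos) (ne_of_gt hApos)] at hlog
  have hk : 0 ≤ α / (2 * c) := by positivity
  have hkey : α / (2 * c) * (1 - B / A) ≤ α / (2 * c) * (Real.log A - Real.log B) :=
    mul_le_mul_of_nonneg_left (by linarith) hk
  have hBA : B / A = (γ * (2 * g - c)) / (g * (2 * γ - c)) := by
    show ((2 * g - c) / (2 * g)) / ((2 * γ - c) / (2 * γ)) = _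
    field_simp
  have heq : γ - g - (α / (2 * c)) * (1 - B / A) = 2 * (γ - g) ^ 2 / (2 * γ - c) := by
    rw [hBA, hαg]
    have h' : γ * 2 - c ≠ 0 := by rwa [mul_comm]
    field_simp
    ring
  have hquad : 2 * (γ - g) ^ 2 / (2 * γ - c) ≤ 0 :=
    div_nonpos_of_nonneg_of_nonpos (by positivity) (le_of_lt h2γc)
  rw [hA, hB]
  linarith
end

section
/- Let α > 0 and c > 0. For each n ≥ 1 let m_n = ⌈αn⌉ and let g^{(n)} ∈ ℝ^{m_n} be a random vector with i.i.d. standard normal entries. Then lim_{n→∞} (1/(n·c))·log E[ exp(−c·√n·‖g^{(n)}‖₂) ] = γ̂ − (α/(2c))·log(1 − c/(2γ̂)), where γ̂ = (2c − √(4c² + 16α))/8. -/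
open MeasureTheory ProbabilityTheory Filter
open Real

open scoped NNReal ENNReal

set_option maxHeartbeats 1000000

lemma pi_pow (g : ℝ → ℝ) :
    ∀ m : ℕ, ∫ x : Fin m → ℝ, ∏ i, g (x i) ∂(Measure.pi fun _ => gaussianReal 0 1)
      = (∫ x, g x ∂(gaussianReal 0 1)) ^ m := by
  intro m
  induction m with
  | zero => simp
  | succ n n_ih =>
      calc
        _ = ∫ x : ℝ × (Fin n → ℝ), g x.1 * ∏ i : Fin n, g (x.2 i)
            ∂((gaussianReal 0 1).prod (Measure.pi fun _ => gaussianReal 0 1)) := by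
          rw [← ((measurePreserving_piFinSuccAbove
            (fun _ : Fin (n+1) => gaussianReal 0 1) 0).symm).integral_comp']
          congr 1
          ext x
          rw [MeasurableEquiv.piFinSuccAbove_symm_apply, Fin.prod_univ_succ]
          simp [Fin.insertNthEquiv, Fin.insertNth_zero]
        _ = (∫ x, g x ∂(gaussianReal 0 1)) * (∫ x, g x ∂(gaussianReal 0 1)) ^ n := by
          rw [← n_ih, ← integral_prod_mul]
        _ = _ := by ring

lemma gauss_one (a : ℝ) (ha : 0 ≤ a) :
    ∫ x : ℝ, Real.exp (-a * x ^ 2) ∂(gaussianReal 0 1) = (Real.sqrt (1 + 2 * a))⁻¹ := by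
  rw [gaussianReal_of_var_ne_zero 0 one_ne_zero, gaussianPDF_def]
  have h1 : (fun x : ℝ => ENNReal.ofReal (gaussianPDFReal 0 1 x))
      = fun x : ℝ => ((Real.toNNReal (gaussianPDFReal 0 1 x) : ℝ≥0) : ℝ≥0∞) := by
    ext x; simp [ENNReal.ofReal]
  rw [h1, integral_withDensity_eq_integral_smul
    ((measurable_gaussianPDFReal 0 1).real_toNNReal) (fun x => Real.exp (-a * x ^ 2))]
  have h2 : ∀ x : ℝ, (Real.toNNReal (gaussianPDFReal 0 1 x)) • Real.exp (-a * x ^ 2)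
      = (Real.sqrt (2 * π))⁻¹ * Real.exp (-(a + 1/2) * x ^ 2) := by
    intro x
    rw [NNReal.smul_def, smul_eq_mul, Real.coe_toNNReal _ (gaussianPDFReal_nonneg _ _ _)]
    simp only [gaussianPDFReal, NNReal.coe_one, mul_one, sub_zero]
    rw [mul_assoc, ← Real.exp_add]
    congr 2
    ring
  simp_rw [h2]
  rw [integral_const_mul, integral_gaussian]
  have ha2 : (0:ℝ) < a + 1/2 := by linarith
  have hπ : (0:ℝ) < π := Real.pi_pos
  rw [← Real.sqrt_inv, ← Real.sqrt_mul (by positivity), ← Real.sqrt_inv]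
  congr 1
  field_simp
  ring

lemma integrable_aux {m : ℕ} {f : (Fin m → ℝ) → ℝ} (hcont : Continuous f)
    (h1 : ∀ x, |f x| ≤ 1) :
    Integrable f (Measure.pi fun _ : Fin m => gaussianReal 0 1) := by
  refine Integrable.mono' (integrable_const 1) hcont.aestronglyMeasurable
    (ae_of_all _ fun x => ?_)
  simpa using h1 x

lemma gauss_pi (m : ℕ) (a : ℝ) (ha : 0 ≤ a) :
    ∫ x : Fin m → ℝ, Real.exp (-a * ∑ i, x i ^ 2)
        ∂(Measure.pi fun _ : Fin m => gaussianReal 0 1)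
      = Real.exp (-(m * Real.log (1 + 2 * a)) / 2) := by
  have h1 : ∀ x : Fin m → ℝ, Real.exp (-a * ∑ i, x i ^ 2)
      = ∏ i, Real.exp (-a * x i ^ 2) := by
    intro x
    rw [← Real.exp_sum, Finset.mul_sum]
  simp_rw [h1]
  rw [pi_pow (fun y => Real.exp (-a * y ^ 2)) m, gauss_one a ha]
  have h2 : (0:ℝ) < 1 + 2 * a := by linarith
  rw [← Real.exp_log (x := Real.sqrt (1 + 2 * a)) (Real.sqrt_pos.2 h2), Real.log_sqrt h2.le,
    ← Real.exp_neg, ← Real.exp_nat_mul]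
  ring_nf

lemma lower_bound (c : ℝ) (hc : 0 < c) (m n : ℕ) (σ : ℝ) (hσ : 0 < σ) :
    Real.exp (-(c * n * σ) / 2 - m * Real.log (1 + c / σ) / 2)
      ≤ ∫ x : Fin m → ℝ, Real.exp (-c * Real.sqrt n * Real.sqrt (∑ i, x i ^ 2))
          ∂(Measure.pi fun _ : Fin m => gaussianReal 0 1) := by
  have ha : (0:ℝ) ≤ c / (2 * σ) := by positivity
  have key : ∀ x : Fin m → ℝ,
      Real.exp (-(c * n * σ) / 2) * Real.exp (-(c / (2 * σ)) * ∑ i, x i ^ 2)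
        ≤ Real.exp (-c * Real.sqrt n * Real.sqrt (∑ i, x i ^ 2)) := by
    intro x
    rw [← Real.exp_add]
    apply Real.exp_le_exp.2
    set S := ∑ i, x i ^ 2 with hS
    have hS0 : 0 ≤ S := Finset.sum_nonneg fun i _ => sq_nonneg _
    set u := Real.sqrt (n : ℝ) with hu
    set v := Real.sqrt S with hv
    have hu2 : u ^ 2 = (n : ℝ) := Real.sq_sqrt (Nat.cast_nonneg n)
    have hv2 : v ^ 2 = S := Real.sq_sqrt hS0
    have hsq : 0 ≤ (σ * u - v) ^ 2 := sq_nonneg _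
    rw [← hu2, ← hv2]
    have heq : (-c * u * v) - (-(c * u ^ 2 * σ) / 2 + -(c / (2 * σ)) * v ^ 2)
        = c * (σ * u - v) ^ 2 / (2 * σ) := by
      field_simp
      ring
    have hpos : 0 ≤ c * (σ * u - v) ^ 2 / (2 * σ) := by positivity
    linarith [heq ▸ hpos]
  calc Real.exp (-(c * n * σ) / 2 - m * Real.log (1 + c / σ) / 2)
      = Real.exp (-(c * n * σ) / 2) * Real.exp (-(m * Real.log (1 + 2 * (c / (2 * σ)))) / 2) := by
        rw [← Real.exp_add]
        congr 1
        have : 2 * (c / (2 * σ)) = c / σ := by field_simp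
        rw [this]
        ring
    _ = ∫ x : Fin m → ℝ, Real.exp (-(c * n * σ) / 2)
          * Real.exp (-(c / (2 * σ)) * ∑ i, x i ^ 2)
          ∂(Measure.pi fun _ : Fin m => gaussianReal 0 1) := by
        rw [integral_const_mul, gauss_pi m _ ha]
    _ ≤ _ := by
        apply integral_mono _ _ key
        · apply integrable_aux (by fun_prop)
          intro x
          rw [← Real.exp_add, abs_of_pos (Real.exp_pos _), Real.exp_le_one_iff]
          have : (0:ℝ) ≤ ∑ i, x i ^ 2 := Finset.sum_nonneg fun i _ => sq_nonneg _
          have h1 : 0 ≤ (c / (2 * σ)) * ∑ i, x i ^ 2 := by positivity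
          have h2 : 0 ≤ (c * n * σ) := by positivity
          linarith
        · apply integrable_aux (by fun_prop)
          intro x
          rw [abs_of_pos (Real.exp_pos _), Real.exp_le_one_iff]
          have h1 : 0 ≤ c * Real.sqrt n * Real.sqrt (∑ i, x i ^ 2) := by positivity
          linarith

lemma phi_le (α c : ℝ) (hα : 0 < α) (hc : 0 < c) (s σ : ℝ) (hs : 0 < s)
    (hsq : s * (s + c) = α) (hσ : 0 < σ) :
    -σ/2 - α/(2*c) * Real.log (1 + c/σ) ≤ -s/2 - α/(2*c) * Real.log (1 + c/s) := by
  have h1 : (0:ℝ) < 1 + c/σ := by positivity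
  have h2 : (0:ℝ) < 1 + c/s := by positivity
  have hu : Real.log (1 + c/s) - Real.log (1 + c/σ) ≤ (1 + c/s)/(1 + c/σ) - 1 := by
    rw [← Real.log_div (ne_of_gt h2) (ne_of_gt h1)]
    exact Real.log_le_sub_one_of_pos (by positivity)
  have h3 : (0:ℝ) < σ + c := by linarith
  have key : (s - σ)/2 + α/(2*c) * ((1 + c/s)/(1 + c/σ) - 1) ≤ 0 := by
    have e1 : (s - σ)/2 + α/(2*c) * ((1 + c/s)/(1 + c/σ) - 1)
        = -((σ - s)^2 / (2 * (σ + c))) := by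
      rw [← hsq]
      field_simp
      ring
    rw [e1]
    exact neg_nonpos.2 (by positivity)
  nlinarith [mul_le_mul_of_nonneg_left hu (by positivity : (0:ℝ) ≤ α/(2*c))]

lemma upper_bound (α c : ℝ) (hα : 0 < α) (hc : 0 < c) (s : ℝ) (hs : 0 < s)
    (hsq : s * (s + c) = α) (m n : ℕ) (hn : 1 ≤ n) (hm : α * n ≤ m)
    (h : ℝ) (hh : 0 < h) (K : ℕ)
    (hK : -(-s/2 - α/(2*c) * Real.log (1 + c/s)) ≤ K * h) :
    ∫ x : Fin m → ℝ, Real.exp (-c * Real.sqrt n * Real.sqrt (∑ i, x i ^ 2))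
        ∂(Measure.pi fun _ : Fin m => gaussianReal 0 1)
      ≤ (K + 1) * Real.exp (n * c * ((-s/2 - α/(2*c) * Real.log (1 + c/s)) + h/2)) := by
  set L := -s/2 - α/(2*c) * Real.log (1 + c/s) with hL
  set μ := (Measure.pi fun _ : Fin m => gaussianReal 0 1) with hμ
  clear_value L
  have hn' : (0:ℝ) < n := by exact_mod_cast hn
  set F := fun x : Fin m → ℝ =>
    (∑ k ∈ Finset.range K, Real.exp (c*n*h/2 - c*n*(((k:ℝ)+1)*h)/2)
      * Real.exp (-(c/(2*(((k:ℝ)+1)*h))) * ∑ i, x i ^ 2)) + Real.exp (-(c*n*(K*h)))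
    with hF
  have pointwise : ∀ x : Fin m → ℝ,
      Real.exp (-c * Real.sqrt n * Real.sqrt (∑ i, x i ^ 2)) ≤ F x := by
    intro x
    set S := ∑ i, x i ^ 2 with hS
    have hS0 : 0 ≤ S := Finset.sum_nonneg fun i _ => sq_nonneg _
    have hsn : (0:ℝ) < Real.sqrt n := Real.sqrt_pos.2 hn'
    set R := Real.sqrt S / Real.sqrt n with hR
    have hR0 : 0 ≤ R := by positivity
    have hSR : S = (n:ℝ) * R^2 := by
      rw [hR, div_pow, Real.sq_sqrt hS0, Real.sq_sqrt (Nat.cast_nonneg n)]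
      field_simp
    have hnn : Real.sqrt (n:ℝ) * Real.sqrt (n:ℝ) = (n:ℝ) :=
      Real.mul_self_sqrt (Nat.cast_nonneg n)
    have hSs : Real.sqrt S = R * Real.sqrt n := by rw [hR]; field_simp
    have hexp : -c * Real.sqrt n * Real.sqrt S = -(c * n * R) := by
      rw [hSs]
      linear_combination (-(c*R)) * hnn
    rw [hexp]
    have hsum0 : (0:ℝ) ≤ ∑ k ∈ Finset.range K, Real.exp (c*n*h/2 - c*n*(((k:ℝ)+1)*h)/2)
        * Real.exp (-(c/(2*(((k:ℝ)+1)*h))) * S) :=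
      Finset.sum_nonneg fun k _ => by positivity
    by_cases hcase : (K:ℝ) * h ≤ R
    · have : Real.exp (-(c * n * R)) ≤ Real.exp (-(c*n*(K*h))) := by
        apply Real.exp_le_exp.2
        have : c * n * (K * h) ≤ c * n * R := by
          apply mul_le_mul_of_nonneg_left hcase (by positivity)
        linarith
      exact le_add_of_nonneg_left hsum0 |>.trans' this
    · push_neg at hcase
      set k := ⌊R / h⌋₊ with hk
      have hkK : k < K := by
        rw [hk, Nat.floor_lt (by positivity)]
        rw [div_lt_iff₀ hh]
        exact hcase
      have hk1 : (k:ℝ) * h ≤ R := by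
        have := Nat.floor_le (show (0:ℝ) ≤ R / h by positivity)
        calc (k:ℝ) * h ≤ (R / h) * h := by
              apply mul_le_mul_of_nonneg_right this hh.le
          _ = R := by field_simp
      have hk2 : R ≤ ((k:ℝ)+1) * h := by
        have := (Nat.lt_floor_add_one (R / h)).le
        calc R = (R / h) * h := by field_simp
          _ ≤ ((k:ℝ)+1) * h := by
              apply mul_le_mul_of_nonneg_right this hh.le
      set σ := ((k:ℝ)+1) * h with hσdef
      have hσpos : 0 < σ := by positivity
      have hhσ : h ≤ σ := by
        rw [hσdef]; nlinarith [Nat.cast_nonneg (α := ℝ) k]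
      have hterm : Real.exp (-(c * n * R))
          ≤ Real.exp (c*n*h/2 - c*n*σ/2) * Real.exp (-(c/(2*σ)) * S) := by
        rw [← Real.exp_add, Real.exp_le_exp, hSR]
        have hd : (R - σ)^2 ≤ h * σ := by nlinarith
        have heq : (c*n*h/2 - c*n*σ/2 + -(c/(2*σ)) * ((n:ℝ) * R^2)) - (-(c * n * R))
            = c * n * (h * σ - (R - σ)^2) / (2*σ) := by
          field_simp
          ring
        have hge : 0 ≤ c * n * (h * σ - (R - σ)^2) / (2*σ) := by
          apply div_nonneg _ (by positivity)
          apply mul_nonneg (by positivity)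
          linarith
        linarith [heq ▸ hge]
      refine hterm.trans (le_add_of_nonneg_right (Real.exp_pos _).le |>.trans' ?_)
      exact Finset.single_le_sum (f := fun k : ℕ => Real.exp (c*n*h/2 - c*n*(((k:ℝ)+1)*h)/2)
        * Real.exp (-(c/(2*(((k:ℝ)+1)*h))) * S)) (fun i _ => by positivity)
        (Finset.mem_range.2 hkK)
  -- integrate
  have int_term : ∀ k : ℕ, k ∈ Finset.range K → Integrable (fun x : Fin m → ℝ =>
      Real.exp (c*n*h/2 - c*n*(((k:ℝ)+1)*h)/2)
        * Real.exp (-(c/(2*(((k:ℝ)+1)*h))) * ∑ i, x i ^ 2)) μ := by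
    intro k _
    apply Integrable.const_mul
    apply integrable_aux (by fun_prop)
    intro x
    rw [abs_of_pos (Real.exp_pos _), Real.exp_le_one_iff]
    have h1 : (0:ℝ) ≤ ∑ i, x i ^ 2 := Finset.sum_nonneg fun i _ => sq_nonneg _
    have h2 : (0:ℝ) < ((k:ℝ)+1)*h := by positivity
    have : 0 ≤ (c/(2*(((k:ℝ)+1)*h))) * ∑ i, x i ^ 2 := by positivity
    linarith
  have int_lhs : Integrable (fun x : Fin m → ℝ =>
      Real.exp (-c * Real.sqrt n * Real.sqrt (∑ i, x i ^ 2))) μ := by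
    apply integrable_aux (by fun_prop)
    intro x
    rw [abs_of_pos (Real.exp_pos _), Real.exp_le_one_iff]
    have h1 : 0 ≤ c * Real.sqrt n * Real.sqrt (∑ i, x i ^ 2) := by positivity
    linarith
  have int_sum : Integrable (fun x : Fin m → ℝ =>
      ∑ k ∈ Finset.range K, Real.exp (c*n*h/2 - c*n*(((k:ℝ)+1)*h)/2)
        * Real.exp (-(c/(2*(((k:ℝ)+1)*h))) * ∑ i, x i ^ 2)) μ :=
    integrable_finset_sum _ int_term
  have int_F : Integrable F μ := int_sum.add (integrable_const _)
  have step1 : ∫ x, Real.exp (-c * Real.sqrt n * Real.sqrt (∑ i, x i ^ 2)) ∂μ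
      ≤ ∫ x, F x ∂μ := integral_mono int_lhs int_F pointwise
  have step2 : ∫ x, F x ∂μ
      = (∑ k ∈ Finset.range K, Real.exp (c*n*h/2 - c*n*(((k:ℝ)+1)*h)/2)
          * Real.exp (-((m:ℝ) * Real.log (1 + 2 * (c/(2*(((k:ℝ)+1)*h))))) / 2))
        + Real.exp (-(c*n*(K*h))) := by
    rw [hF]
    rw [integral_add int_sum (integrable_const _), integral_finset_sum _ int_term,
      integral_const]
    simp only [measure_univ, probReal_univ, ENNReal.toReal_one, smul_eq_mul, one_mul]
    congr 1
    apply Finset.sum_congr rfl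
    intro k _
    rw [integral_const_mul, gauss_pi m _ (by positivity)]
  have bound_term : ∀ k : ℕ, Real.exp (c*n*h/2 - c*n*(((k:ℝ)+1)*h)/2)
      * Real.exp (-((m:ℝ) * Real.log (1 + 2 * (c/(2*(((k:ℝ)+1)*h))))) / 2)
      ≤ Real.exp (n * c * (L + h/2)) := by
    intro k
    set σ := ((k:ℝ)+1) * h with hσdef
    have hσpos : 0 < σ := by positivity
    have h2σ : 1 + 2 * (c/(2*σ)) = 1 + c/σ := by field_simp
    rw [h2σ, ← Real.exp_add, Real.exp_le_exp]
    have hlog : 0 ≤ Real.log (1 + c/σ) := Real.log_nonneg (by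
      have : 0 < c/σ := by positivity
      linarith)
    have hmono : -((m:ℝ) * Real.log (1 + c/σ)) / 2 ≤ -((α*n) * Real.log (1 + c/σ)) / 2 := by
      have := mul_le_mul_of_nonneg_right hm hlog
      linarith
    have hphi := phi_le α c hα hc s σ hs hsq hσpos
    have : c*n*h/2 - c*n*σ/2 + -((α*n) * Real.log (1 + c/σ)) / 2
        = n * c * ((-σ/2 - α/(2*c) * Real.log (1 + c/σ)) + h/2) := by
      field_simp
      ring
    have hfin : c*n*h/2 - c*n*σ/2 + -((α*n) * Real.log (1 + c/σ)) / 2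
        ≤ n * c * (L + h/2) := by
      rw [this]
      apply mul_le_mul_of_nonneg_left _ (by positivity)
      linarith [hphi, hL]
    linarith
  have bound_last : Real.exp (-(c*n*(K*h))) ≤ Real.exp (n * c * (L + h/2)) := by
    rw [Real.exp_le_exp]
    have h1 : -((K:ℝ)*h) ≤ L + h/2 := by linarith
    calc -(c*n*((K:ℝ)*h)) = c*n*(-((K:ℝ)*h)) := by ring
      _ ≤ c*n*(L + h/2) := mul_le_mul_of_nonneg_left h1 (by positivity)
      _ = n*c*(L + h/2) := by ring
  calc ∫ x, Real.exp (-c * Real.sqrt n * Real.sqrt (∑ i, x i ^ 2)) ∂μ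
      ≤ _ := step1
    _ = _ := step2
    _ ≤ (∑ _k ∈ Finset.range K, Real.exp (n * c * (L + h/2)))
        + Real.exp (n * c * (L + h/2)) := by
        exact add_le_add (Finset.sum_le_sum fun k _ => bound_term k) bound_last
    _ = (K + 1) * Real.exp (n * c * (L + h/2)) := by
        rw [Finset.sum_const, Finset.card_range, nsmul_eq_mul]
        ring

theorem sphere_exponent_limit (α c : ℝ) (hα : 0 < α) (hc : 0 < c) :
    Tendsto (fun n : ℕ =>
        (1 / ((n : ℝ) * c)) * Real.log
          (∫ x : Fin (⌈α * n⌉₊) → ℝ,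
            Real.exp (-c * Real.sqrt n * Real.sqrt (∑ i, (x i) ^ 2))
            ∂(Measure.pi fun _ => gaussianReal 0 1)))
      atTop
      (nhds ((2 * c - Real.sqrt (4 * c ^ 2 + 16 * α)) / 8 -
        (α / (2 * c)) * Real.log
          (1 - c / (2 * ((2 * c - Real.sqrt (4 * c ^ 2 + 16 * α)) / 8))))) := by
  set q := Real.sqrt (c ^ 2 + 4 * α) with hq
  have hq2 : q ^ 2 = c ^ 2 + 4 * α := Real.sq_sqrt (by positivity)
  have hqc : c < q := by
    rw [hq]
    have : c = Real.sqrt (c ^ 2) := by rw [Real.sqrt_sq hc.le]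
    rw [this]
    apply Real.sqrt_lt_sqrt (by positivity)
    nlinarith [Real.sqrt_sq hc.le]
  set s := (q - c) / 2 with hs_def
  have hs : 0 < s := by rw [hs_def]; linarith
  have hsq : s * (s + c) = α := by
    rw [hs_def]
    nlinarith [hq2]
  set L := -s/2 - α/(2*c) * Real.log (1 + c/s) with hL
  have hsqrt4 : Real.sqrt (4 * c ^ 2 + 16 * α) = 2 * q := by
    rw [hq]
    rw [show (4 * c ^ 2 + 16 * α : ℝ) = 2 ^ 2 * (c ^ 2 + 4 * α) by ring,
      Real.sqrt_mul (by positivity), Real.sqrt_sq (by norm_num)]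
  have hne : q - c ≠ 0 := by linarith
  have harg : 1 - c / (2 * ((2 * c - Real.sqrt (4 * c ^ 2 + 16 * α)) / 8)) = 1 + c / s := by
    rw [hsqrt4, hs_def]
    rw [show (2:ℝ) * ((2 * c - 2 * q) / 8) = -((q - c)/2) by ring, div_neg]
    ring
  have htarget : (2 * c - Real.sqrt (4 * c ^ 2 + 16 * α)) / 8 -
      (α / (2 * c)) * Real.log
        (1 - c / (2 * ((2 * c - Real.sqrt (4 * c ^ 2 + 16 * α)) / 8))) = L := by
    rw [harg, hsqrt4, hL, hs_def]
    ring
  rw [htarget]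
  -- the lower bound on f n
  have hmlow : ∀ n : ℕ, α * n ≤ (⌈α * n⌉₊ : ℝ) := fun n => Nat.le_ceil _
  have hmup : ∀ n : ℕ, (⌈α * n⌉₊ : ℝ) ≤ α * n + 1 := by
    intro n
    exact (Nat.ceil_lt_add_one (by positivity)).le
  set A := fun n : ℕ => ∫ x : Fin (⌈α * n⌉₊) → ℝ,
      Real.exp (-c * Real.sqrt n * Real.sqrt (∑ i, (x i) ^ 2))
      ∂(Measure.pi fun _ => gaussianReal 0 1) with hA
  set D := Real.log (1 + c / s) / 2 with hD
  have hDpos : 0 < D := by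
    rw [hD]
    have : 0 < c / s := by positivity
    have := Real.log_pos (by linarith : 1 < 1 + c / s)
    linarith
  have hAlow : ∀ n : ℕ, 1 ≤ n → Real.exp ((n : ℝ) * c * L - D) ≤ A n := by
    intro n hn
    refine le_trans ?_ (lower_bound c hc (⌈α * n⌉₊) n s hs)
    rw [Real.exp_le_exp]
    have hlog : 0 ≤ Real.log (1 + c / s) := Real.log_nonneg (by
      have : 0 < c / s := by positivity
      linarith)
    have h1 : (⌈α * n⌉₊ : ℝ) * Real.log (1 + c / s) ≤ (α * n + 1) * Real.log (1 + c / s) :=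
      mul_le_mul_of_nonneg_right (hmup n) hlog
    have h2 : (n : ℝ) * c * L - D
        = -(c * n * s) / 2 - (α * n + 1) * Real.log (1 + c / s) / 2 := by
      rw [hL, hD]
      field_simp
      ring
    rw [h2]
    linarith
  have hApos : ∀ n : ℕ, 1 ≤ n → 0 < A n := fun n hn =>
    lt_of_lt_of_le (Real.exp_pos _) (hAlow n hn)
  have htend : ∀ C : ℝ, Tendsto (fun n : ℕ => C / ((n : ℝ) * c)) atTop (nhds 0) := by
    intro C
    apply Tendsto.div_atTop (tendsto_const_nhds)
    exact (tendsto_natCast_atTop_atTop).atTop_mul_const hc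
  apply tendsto_order.2
  constructor
  · intro a ha
    have h1 := (htend D).eventually (gt_mem_nhds (by linarith : (0:ℝ) < L - a))
    filter_upwards [h1, eventually_ge_atTop 1] with n h1 h2
    have hnc : (0:ℝ) < (n : ℝ) * c := by
      have : (0:ℝ) < (n:ℝ) := by exact_mod_cast h2
      positivity
    have hlog : (n : ℝ) * c * L - D ≤ Real.log (A n) := by
      have := Real.log_le_log (Real.exp_pos _) (hAlow n h2)
      rwa [Real.log_exp] at this
    have : L - D / ((n:ℝ) * c) ≤ 1 / ((n:ℝ) * c) * Real.log (A n) := by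
      have h3 := mul_le_mul_of_nonneg_left hlog (le_of_lt (by positivity : (0:ℝ) < 1 / ((n:ℝ)*c)))
      have h4 : 1 / ((n:ℝ) * c) * ((n : ℝ) * c * L - D) = L - D / ((n:ℝ) * c) := by
        field_simp
      linarith [h4 ▸ h3]
    calc a < L - D / ((n:ℝ) * c) := by linarith
      _ ≤ _ := this
  · intro a ha
    set ε := a - L with hε
    have hεpos : 0 < ε := by linarith
    set K := ⌈(-L) / ε⌉₊ with hK
    have hKL : -L ≤ (K : ℝ) * ε := by
      have := Nat.le_ceil ((-L) / ε)
      calc -L = ((-L) / ε) * ε := by field_simp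
        _ ≤ (K : ℝ) * ε := mul_le_mul_of_nonneg_right this hεpos.le
    have h1 := (htend (Real.log ((K : ℝ) + 1))).eventually
      (gt_mem_nhds (by linarith : (0:ℝ) < ε / 2))
    filter_upwards [h1, eventually_ge_atTop 1] with n h1 h2
    have hnc : (0:ℝ) < (n : ℝ) * c := by
      have : (0:ℝ) < (n:ℝ) := by exact_mod_cast h2
      positivity
    have hup := upper_bound α c hα hc s hs hsq (⌈α * n⌉₊) n h2 (hmlow n) ε hεpos K
      (by rw [← hL]; exact hKL)
    rw [← hL] at hup
    have hlogup : Real.log (A n) ≤ Real.log ((K : ℝ) + 1) + (n : ℝ) * c * (L + ε / 2) := by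
      have hK1 : (0:ℝ) < (K : ℝ) + 1 := by positivity
      have := Real.log_le_log (hApos n h2) hup
      rwa [Real.log_mul (ne_of_gt hK1) (ne_of_gt (Real.exp_pos _)), Real.log_exp] at this
    have hfin : 1 / ((n:ℝ) * c) * Real.log (A n)
        ≤ L + ε / 2 + Real.log ((K : ℝ) + 1) / ((n:ℝ) * c) := by
      have h3 := mul_le_mul_of_nonneg_left hlogup
        (le_of_lt (by positivity : (0:ℝ) < 1 / ((n:ℝ)*c)))
      have h4 : 1 / ((n:ℝ) * c) * (Real.log ((K : ℝ) + 1) + (n : ℝ) * c * (L + ε / 2))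
          = L + ε / 2 + Real.log ((K : ℝ) + 1) / ((n:ℝ) * c) := by
        field_simp
        ring
      linarith [h4 ▸ h3]
    calc 1 / ((n:ℝ) * c) * Real.log (A n) ≤ L + ε / 2 + Real.log ((K : ℝ) + 1) / ((n:ℝ) * c) := hfin
      _ < L + ε / 2 + ε / 2 := by linarith
      _ = a := by rw [hε]; ring
end
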